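/- arXiv:math/0312426 — 2 statements merged into one kernel-verified Lean document; each statement's English description precedes it below -/
import Mathlib

section
/- Let r ∈ Z(G) and let x = (V,c,V,c·r) ∈ N_r with V generic. If there exists (g₁,g₂) ∈ K with (g₁,g₂)·x ∈ N_e (i.e. (g₁,g₂)·x is of the form (W,c',W,c')), then there exists s ∈ Z(G) with s²·r = e; in particular r ∈ 2Z(G). Equivalently, if r ∉ 2Z(G), then the K-orbit of x does not meet N_e. -/
/-! Model of flat `G`-connections on `Σ_ℓ # RP²` and its orientable double cover
(genus `2ℓ`), following the two-base-point description.  A point of `G^{4ℓ+2}`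
is a tuple `(a₁,b₁,…,a_ℓ,b_ℓ,c, ā₁,b̄₁,…,ā_ℓ,b̄_ℓ,c̄)`. -/
structure Pt (G : Type*) (ℓ : ℕ) where
  a : Fin ℓ → G
  b : Fin ℓ → G
  c : G
  a' : Fin ℓ → G
  b' : Fin ℓ → G
  c' : G

variable {G : Type*} [Group G] {ℓ : ℕ}

open scoped commutatorElement

/-- The ordered product of commutators `∏_{i=1}^{ℓ} [aᵢ,bᵢ]`. -/
def relProd (a b : Fin ℓ → G) : G := (List.ofFn fun i => ⁅a i, b i⁆).prod

/-- Membership in `M`: `∏[aᵢ,bᵢ] = c·c̄` and `∏[āᵢ,b̄ᵢ] = c̄·c`. -/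
def inM (x : Pt G ℓ) : Prop :=
  relProd x.a x.b = x.c * x.c' ∧ relProd x.a' x.b' = x.c' * x.c

/-- The action of `K = G × G` on tuples. -/
def act (g : G × G) (x : Pt G ℓ) : Pt G ℓ where
  a := fun i => g.1 * x.a i * g.1⁻¹
  b := fun i => g.1 * x.b i * g.1⁻¹
  c := g.1 * x.c * g.2⁻¹
  a' := fun i => g.2 * x.a' i * g.2⁻¹
  b' := fun i => g.2 * x.b' i * g.2⁻¹
  c' := g.2 * x.c' * g.1⁻¹

/-- The involution `τ(V,c,V̄,c̄) = (V̄,c̄,V,c)`. -/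
def tauPt (x : Pt G ℓ) : Pt G ℓ := ⟨x.a', x.b', x.c', x.a, x.b, x.c⟩

/-- Membership in `M^τ`: a point of `M` of the form `(V,c,V,c)`. -/
def inMtau (x : Pt G ℓ) : Prop := inM x ∧ x.a' = x.a ∧ x.b' = x.b ∧ x.c' = x.c

/-- `V = (a₁,b₁,…,a_ℓ,b_ℓ)` is generic if every `g` commuting with all `aᵢ, bᵢ`
is central. -/
def Generic (a b : Fin ℓ → G) : Prop :=
  ∀ g : G, (∀ i, g * a i = a i * g) → (∀ i, g * b i = b i * g) →
    g ∈ Subgroup.center G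

/-- Membership in `N_r = {(V,c,V,c·r) : ∏[aᵢ,bᵢ] = c²·r}`. -/
def inN (r : G) (x : Pt G ℓ) : Prop :=
  x.a' = x.a ∧ x.b' = x.b ∧ x.c' = x.c * r ∧ relProd x.a x.b = x.c ^ 2 * r

/-! If `(g₁,g₂)` moves `x = (V,c,V,c·r)` into `N_e`, then `g₁` and `g₂` conjugate `V` to the same
tuple, so `s = g₁⁻¹g₂` centralizes `V` and is central by genericity. Comparing the `c`- and
`c̄`-components, `g₂(c·r)g₁⁻¹ = g₁cg₂⁻¹`, gives `s·c·r = c·s⁻¹`, hence `s²·r = e` and `r = (s⁻¹)²`. -/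

theorem commute_inv_mul_of_conj_eq {g₁ g₂ x : G} (h : g₂ * x * g₂⁻¹ = g₁ * x * g₁⁻¹) :
    Commute (g₁⁻¹ * g₂) x := by
  rw [mul_inv_eq_iff_eq_mul] at h
  simp only [Commute, SemiconjBy, mul_assoc, h]
  group

theorem Generic.inv_mul_mem_center {a b : Fin ℓ → G} (hgen : Generic a b) {g₁ g₂ : G}
    (ha : ∀ i, g₂ * a i * g₂⁻¹ = g₁ * a i * g₁⁻¹) (hb : ∀ i, g₂ * b i * g₂⁻¹ = g₁ * b i * g₁⁻¹) :
    g₁⁻¹ * g₂ ∈ Subgroup.center G :=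
  hgen _ (fun i => commute_inv_mul_of_conj_eq (ha i)) (fun i => commute_inv_mul_of_conj_eq (hb i))

theorem sq_mul_eq_one_of_mul_eq {s c r : G} (hs : s ∈ Subgroup.center G)
    (h : s * (c * r) = c * s⁻¹) : s ^ 2 * r = 1 := by
  rw [← mul_assoc, (Subgroup.mem_center_iff.mp hs c).symm, mul_assoc] at h
  rw [pow_two, mul_assoc, mul_left_cancel h, mul_inv_cancel]

theorem sq_mul_eq_one_of_twisted_eq {g₁ g₂ c r : G} (hs : g₁⁻¹ * g₂ ∈ Subgroup.center G)
    (h : g₂ * (c * r) * g₁⁻¹ = g₁ * c * g₂⁻¹ * 1) : (g₁⁻¹ * g₂) ^ 2 * r = 1 := by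
  refine sq_mul_eq_one_of_mul_eq (c := c) hs ?_
  have h' := congrArg (fun y => g₁⁻¹ * y * g₁) h
  simp only [mul_one] at h'
  convert h' using 1 <;> group

theorem statement7_general (r : G)
    (a b : Fin ℓ → G) (c : G)
    (hgen : Generic a b)
    (k : G × G) (hk : inN (1 : G) (act k (⟨a, b, c, a, b, c * r⟩ : Pt G ℓ))) :
    (∃ s ∈ Subgroup.center G, s ^ 2 * r = 1) ∧
    ∃ t ∈ Subgroup.center G, t ^ 2 = r := by
  obtain ⟨ha, hb, hc, -⟩ := hk
  have hs := hgen.inv_mul_mem_center (congrFun ha) (congrFun hb)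
  have hsq := sq_mul_eq_one_of_twisted_eq hs hc
  exact ⟨⟨_, hs, hsq⟩, _, inv_mem hs, by rw [inv_pow, ← eq_inv_of_mul_eq_one_right hsq]⟩

/-- if `x = (V,c,V,c·r) ∈ N_r` with `V` generic and some
`(g₁,g₂) ∈ K` moves `x` into `N_e`, then `s²·r = e` for some central `s`;
in particular `r ∈ 2Z(G)`. -/
theorem statement7 (hℓ : 1 ≤ ℓ) (r : G) (hr : r ∈ Subgroup.center G)
    (a b : Fin ℓ → G) (c : G)
    (hx : inN r (⟨a, b, c, a, b, c * r⟩ : Pt G ℓ)) (hgen : Generic a b)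
    (k : G × G) (hk : inN (1 : G) (act k (⟨a, b, c, a, b, c * r⟩ : Pt G ℓ))) :
    (∃ s ∈ Subgroup.center G, s ^ 2 * r = 1) ∧
    ∃ t ∈ Subgroup.center G, t ^ 2 = r :=
  statement7_general r a b c hgen k hk
end

section
/- Let r ∈ Z(G) and let x = (V,d,c,V,d,c·r) ∈ M with (V,d) generic. If there exists (g₁,g₂) ∈ K such that (g₁,g₂)·x lies in M^τ (i.e. is of the form (W,d',c',W,d',c')), then there exists s ∈ Z(G) with s²·r = e; in particular r ∈ 2Z(G) := {s² : s ∈ Z(G)}. -/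
/-! If `(g₁,g₂)` moves `x` into `M^τ`, then conjugation by `g₁` and by `g₂` agree on `V` and `d`,
so `s = g₁⁻¹g₂` centralises `(V,d)` and is central by genericity. Comparing the two `c`-entries
of the moved point, `g₂ (c r) g₁⁻¹ = g₁ c g₂⁻¹`, then gives `s c r s = c`, i.e. `s² r = e`,
and `r = (s⁻¹)²`. -/

/-! Model of flat `G`-connections on `Σ_ℓ # Klein bottle` and its orientable
double cover (genus `2ℓ+1`), in the two-base-point description.  A point of
`G^{4ℓ+4}` is a tuple `(a₁,b₁,…,a_ℓ,b_ℓ,d,c, ā₁,b̄₁,…,ā_ℓ,b̄_ℓ,d̄,c̄)`. -/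
structure PtK (G : Type*) (ℓ : ℕ) where
  a : Fin ℓ → G
  b : Fin ℓ → G
  d : G
  c : G
  a' : Fin ℓ → G
  b' : Fin ℓ → G
  d' : G
  c' : G

variable {G : Type*} [Group G] {ℓ : ℕ}

open scoped commutatorElement

/-- Membership in `M`: `∏[aᵢ,bᵢ] = c·d̄·c⁻¹·d` and `∏[āᵢ,b̄ᵢ] = c̄·d·c̄⁻¹·d̄`. -/
def inMK (x : PtK G ℓ) : Prop :=
  relProd x.a x.b = x.c * x.d' * x.c⁻¹ * x.d ∧
  relProd x.a' x.b' = x.c' * x.d * x.c'⁻¹ * x.d'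

/-- The action of `K = G × G` on tuples. -/
def actK (g : G × G) (x : PtK G ℓ) : PtK G ℓ where
  a := fun i => g.1 * x.a i * g.1⁻¹
  b := fun i => g.1 * x.b i * g.1⁻¹
  d := g.1 * x.d * g.1⁻¹
  c := g.1 * x.c * g.2⁻¹
  a' := fun i => g.2 * x.a' i * g.2⁻¹
  b' := fun i => g.2 * x.b' i * g.2⁻¹
  d' := g.2 * x.d' * g.2⁻¹
  c' := g.2 * x.c' * g.1⁻¹

/-- The involution `τ(V,d,c,V̄,d̄,c̄) = (V̄,d̄,c̄,V,d,c)`. -/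
def tauK (x : PtK G ℓ) : PtK G ℓ := ⟨x.a', x.b', x.d', x.c', x.a, x.b, x.d, x.c⟩

/-- Membership in `M^τ`: a point of `M` of the form `(V,d,c,V,d,c)`. -/
def inMtauK (x : PtK G ℓ) : Prop :=
  inMK x ∧ x.a' = x.a ∧ x.b' = x.b ∧ x.d' = x.d ∧ x.c' = x.c

/-- `(V,d)` is generic if every `g` commuting with `d` and with all `aᵢ, bᵢ`
is central. -/
def GenericK (a b : Fin ℓ → G) (d : G) : Prop :=
  ∀ g : G, g * d = d * g → (∀ i, g * a i = a i * g) →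
    (∀ i, g * b i = b i * g) → g ∈ Subgroup.center G

open Subgroup

lemma commute_inv_mul_of_conj_eq_s10 {g h x : G} (hx : h * x * h⁻¹ = g * x * g⁻¹) :
    Commute (g⁻¹ * h) x :=
  calc g⁻¹ * h * x = g⁻¹ * (h * x * h⁻¹) * h := by group
    _ = g⁻¹ * (g * x * g⁻¹) * h := by rw [hx]
    _ = x * (g⁻¹ * h) := by group

lemma GenericK.inv_mul_mem_center {a b : Fin ℓ → G} {d g h : G} (hgen : GenericK a b d)
    (hd : h * d * h⁻¹ = g * d * g⁻¹) (ha : ∀ i, h * a i * h⁻¹ = g * a i * g⁻¹)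
    (hb : ∀ i, h * b i * h⁻¹ = g * b i * g⁻¹) : g⁻¹ * h ∈ center G :=
  hgen _ (commute_inv_mul_of_conj_eq_s10 hd) (fun i => commute_inv_mul_of_conj_eq_s10 (ha i))
    (fun i => commute_inv_mul_of_conj_eq_s10 (hb i))

lemma sq_mul_eq_one_of_mul_mul_inv_eq {g h c r : G} (hs : g⁻¹ * h ∈ center G)
    (hc : h * (c * r) * g⁻¹ = g * c * h⁻¹) : (g⁻¹ * h) ^ 2 * r = 1 := by
  have hscrs : g⁻¹ * h * c * r * (g⁻¹ * h) = c :=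
    calc g⁻¹ * h * c * r * (g⁻¹ * h) = g⁻¹ * (h * (c * r) * g⁻¹) * h := by group
      _ = g⁻¹ * (g * c * h⁻¹) * h := by rw [hc]
      _ = c := by group
  set s := g⁻¹ * h
  have hcomm := mem_center_iff.mp hs
  refine mul_left_cancel (a := c) ?_
  calc c * (s ^ 2 * r) = c * s * (s * r) := by rw [pow_two]; group
    _ = s * c * r * s := by rw [hcomm c, ← hcomm r]; simp only [mul_assoc]
    _ = c * 1 := by rw [hscrs, mul_one]

theorem statement10_general (r : G)
    (a b : Fin ℓ → G) (d c : G)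
    (hgen : GenericK a b d)
    (k : G × G)
    (hk : inMtauK (actK k (⟨a, b, d, c, a, b, d, c * r⟩ : PtK G ℓ))) :
    (∃ s ∈ Subgroup.center G, s ^ 2 * r = 1) ∧
    ∃ t ∈ Subgroup.center G, t ^ 2 = r := by
  obtain ⟨-, ha, hb, hd, hc⟩ := hk
  have hs : k.1⁻¹ * k.2 ∈ center G := hgen.inv_mul_mem_center hd (congrFun ha) (congrFun hb)
  have hsr : (k.1⁻¹ * k.2) ^ 2 * r = 1 := sq_mul_eq_one_of_mul_mul_inv_eq hs hc
  exact ⟨⟨_, hs, hsr⟩, _, inv_mem hs, by rw [inv_pow, eq_inv_of_mul_eq_one_right hsr]⟩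

/-- if `x = (V,d,c,V,d,c·r) ∈ M` with `r` central and `(V,d)`
generic, and some `(g₁,g₂) ∈ K` moves `x` into `M^τ`, then `s²·r = e` for some
central `s`; in particular `r ∈ 2Z(G)`. -/
theorem statement10 (hℓ : 1 ≤ ℓ) (r : G) (hr : r ∈ Subgroup.center G)
    (a b : Fin ℓ → G) (d c : G)
    (hx : inMK (⟨a, b, d, c, a, b, d, c * r⟩ : PtK G ℓ))
    (hgen : GenericK a b d)
    (k : G × G)
    (hk : inMtauK (actK k (⟨a, b, d, c, a, b, d, c * r⟩ : PtK G ℓ))) :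
    (∃ s ∈ Subgroup.center G, s ^ 2 * r = 1) ∧
    ∃ t ∈ Subgroup.center G, t ^ 2 = r :=
  statement10_general r a b d c hgen k hk
end
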